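/- arXiv:2211.10066 — 6 statements merged into one kernel-verified Lean document; each statement's English description precedes it below -/
import Mathlib

section
/- Let v ∈ T_{x⁰}L^d with ⟨v,v⟩_L = 1 and let G = span(x⁰, v) ∩ L^d. For any x ∈ L^d, the minimizer over G of y ↦ d_L(x, y) is P^v(x) = (−⟨x,x⁰⟩_L x⁰ + ⟨x,v⟩_L v) / √(⟨x,x⁰⟩_L² − ⟨x,v⟩_L²). -/
open MeasureTheory

noncomputable def arcosh (x : ℝ) : ℝ := Real.log (x + Real.sqrt (x^2 - 1))

noncomputable def mink (d : ℕ) (x y : Fin (d+1) → ℝ) : ℝ :=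
  -(x 0 * y 0) + ∑ i : Fin d, x i.succ * y i.succ

def LorentzSet (d : ℕ) : Set (Fin (d+1) → ℝ) :=
  {x | mink d x x = -1 ∧ 0 < x 0}

noncomputable def dL (d : ℕ) (x y : Fin (d+1) → ℝ) : ℝ :=
  arcosh (-(mink d x y))

noncomputable def lorOrigin (d : ℕ) : Fin (d+1) → ℝ := fun i => if i = 0 then 1 else 0

/-- Geodesic projection onto the geodesic `span(x⁰,v) ∩ L^d`. -/
noncomputable def PvGeo (d : ℕ) (v x : Fin (d+1) → ℝ) : Fin (d+1) → ℝ := fun i =>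
  (-(mink d x (lorOrigin d)) * lorOrigin d i + mink d x v * v i) /
    Real.sqrt ((mink d x (lorOrigin d))^2 - (mink d x v)^2)

lemma mink_lin (d : ℕ) (x u w : Fin (d+1) → ℝ) (α β : ℝ) :
    mink d x (α • u + β • w) = α * mink d x u + β * mink d x w := by
  simp only [mink, Pi.add_apply, Pi.smul_apply, smul_eq_mul]
  have h : ∀ i ∈ Finset.univ (α := Fin d),
      x i.succ * (α * u i.succ + β * w i.succ)
        = α * (x i.succ * u i.succ) + β * (x i.succ * w i.succ) := by
    intros; ring
  rw [Finset.sum_congr rfl h, Finset.sum_add_distrib, ← Finset.mul_sum, ← Finset.mul_sum]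
  ring

lemma mink_comm (d : ℕ) (x y : Fin (d+1) → ℝ) : mink d x y = mink d y x := by
  simp only [mink]
  congr 1
  · ring
  · exact Finset.sum_congr rfl fun i _ => mul_comm _ _

lemma mink_x0 (d : ℕ) (x : Fin (d+1) → ℝ) : mink d x (lorOrigin d) = -(x 0) := by
  simp [mink, lorOrigin, Fin.succ_ne_zero]

lemma arcosh_mono {s t : ℝ} (hs : 1 ≤ s) (hst : s ≤ t) : arcosh s ≤ arcosh t := by
  unfold arcosh
  have h1 : (0:ℝ) < s + Real.sqrt (s^2 - 1) := by
    have := Real.sqrt_nonneg (s^2 - 1); linarith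
  apply Real.log_le_log h1
  have : Real.sqrt (s^2-1) ≤ Real.sqrt (t^2-1) := by
    apply Real.sqrt_le_sqrt; nlinarith
  linarith

set_option maxHeartbeats 2000000 in
/-- `P^v(x)` is the minimizer of `y ↦ d_L(x,y)` over the geodesic
`G = span(x⁰,v) ∩ L^d`. -/
theorem geodesic_projection_is_minimizer (d : ℕ) (v : Fin (d+1) → ℝ)
    (hv0 : v 0 = 0) (hv : mink d v v = 1)
    (x : Fin (d+1) → ℝ) (hx : x ∈ LorentzSet d) :
    (PvGeo d v x ∈ Submodule.span ℝ {lorOrigin d, v} ∧ PvGeo d v x ∈ LorentzSet d) ∧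
    ∀ y ∈ Submodule.span ℝ {lorOrigin d, v}, y ∈ LorentzSet d →
      dL d x (PvGeo d v x) ≤ dL d x y := by
  obtain ⟨hxm, hx0⟩ := hx
  set a : ℝ := x 0 with ha_def
  set b : ℝ := mink d x v with hb_def
  -- basic mink values
  have m00 : mink d (lorOrigin d) (lorOrigin d) = -1 := by
    simp [mink, lorOrigin, Fin.succ_ne_zero]
  have m0v : mink d (lorOrigin d) v = 0 := by
    simp [mink, lorOrigin, Fin.succ_ne_zero, hv0]
  have mx0 : mink d x (lorOrigin d) = -a := mink_x0 d x
  -- Cauchy–Schwarz: b² ≤ a² - 1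
  have hsumx : ∑ i : Fin d, (x i.succ)^2 = a^2 - 1 := by
    have := hxm
    simp only [mink] at this
    have h : ∀ i ∈ Finset.univ (α := Fin d), x i.succ * x i.succ = (x i.succ)^2 := by
      intros; ring
    rw [Finset.sum_congr rfl h] at this
    nlinarith [this]
  have hsumv : ∑ i : Fin d, (v i.succ)^2 = 1 := by
    have := hv
    simp only [mink, hv0] at this
    have h : ∀ i ∈ Finset.univ (α := Fin d), v i.succ * v i.succ = (v i.succ)^2 := by
      intros; ring
    rw [Finset.sum_congr rfl h] at this
    linarith
  have hcs : b^2 ≤ a^2 - 1 := by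
    have hb : b = ∑ i : Fin d, x i.succ * v i.succ := by
      simp [hb_def, mink, hv0]
    have := Finset.sum_mul_sq_le_sq_mul_sq Finset.univ (fun i : Fin d => x i.succ)
      (fun i : Fin d => v i.succ)
    rw [hsumx, hsumv] at this
    rw [hb]
    simpa using this
  have hab : 1 ≤ a^2 - b^2 := by linarith
  set s : ℝ := Real.sqrt (a^2 - b^2) with hs_def
  have hs1 : 1 ≤ s := by
    rw [hs_def]
    have := Real.sqrt_le_sqrt hab
    simpa using this
  have hs0 : 0 < s := by linarith
  have hs2 : s^2 = a^2 - b^2 := Real.sq_sqrt (by linarith)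
  have hsne : s ≠ 0 := ne_of_gt hs0
  -- P = (a/s) • x⁰ + (b/s) • v
  have hP : PvGeo d v x = (a/s) • lorOrigin d + (b/s) • v := by
    funext i
    simp only [PvGeo, mx0, Pi.add_apply, Pi.smul_apply, smul_eq_mul, ← hb_def, ← hs_def]
    field_simp
    rw [← hs_def]
  have hPmem : PvGeo d v x ∈ Submodule.span ℝ {lorOrigin d, v} := by
    rw [hP]
    exact Submodule.add_mem _
      (Submodule.smul_mem _ _ (Submodule.subset_span (by simp)))
      (Submodule.smul_mem _ _ (Submodule.subset_span (by simp)))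
  -- mink of combinations
  have mcomb : ∀ α β : ℝ, mink d (α • lorOrigin d + β • v) (α • lorOrigin d + β • v)
      = -α^2 + β^2 := by
    intro α β
    rw [mink_lin, mink_comm d _ (lorOrigin d), mink_comm d _ v, mink_lin, mink_lin,
      m00, m0v, mink_comm d v (lorOrigin d), m0v, hv]
    ring
  have mxcomb : ∀ α β : ℝ, mink d x (α • lorOrigin d + β • v) = -(α*a) + β*b := by
    intro α β
    rw [mink_lin, mx0, ← hb_def]; ring
  have hPL : PvGeo d v x ∈ LorentzSet d := by
    constructor
    · rw [hP, mcomb]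
      field_simp
      nlinarith [hs2]
    · show 0 < PvGeo d v x 0
      rw [hP]
      simp only [Pi.add_apply, Pi.smul_apply, smul_eq_mul, lorOrigin, if_pos rfl, hv0]
      have : 0 < a / s := div_pos hx0 hs0
      simpa using this
  clear_value a b s
  refine ⟨⟨hPmem, hPL⟩, ?_⟩
  intro y hy hyL
  obtain ⟨α, β, hαβ⟩ := Submodule.mem_span_pair.mp hy
  obtain ⟨hym, hy0⟩ := hyL
  rw [← hαβ] at hym hy0 ⊢
  rw [mcomb] at hym
  have hy0' : 0 < α := by
    simpa [lorOrigin, hv0] using hy0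
  -- distances
  have hdP : -(mink d x (PvGeo d v x)) = s := by
    rw [hP, mxcomb]
    field_simp
    nlinarith [hs2]
  have hdy : -(mink d x (α • lorOrigin d + β • v)) = α*a - β*b := by
    rw [mxcomb]; ring
  unfold dL
  rw [hdP, hdy]
  apply arcosh_mono hs1
  -- need s ≤ α*a - β*b
  have hα2 : α^2 = 1 + β^2 := by linarith
  have ha1 : 1 ≤ a := by nlinarith [hx0]
  have h2 : (β*b)^2 < (α*a)^2 := by
    nlinarith [mul_nonneg (sq_nonneg β) (by linarith : (0:ℝ) ≤ a^2 - b^2)]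
  have hpos : 0 < α*a - β*b := by
    have h3 : β*b < α*a :=
      lt_of_pow_lt_pow_left₀ 2 (le_of_lt (mul_pos hy0' hx0)) h2
    linarith
  nlinarith [sq_nonneg (a*β - b*α), hpos, hs2, hs0]
end

section
/- In the Lorentz model, the Busemann function associated to the geodesic ray γ_v(t) = cosh(t)x⁰ + sinh(t)v, defined as B_v(x) = lim_{t→∞} (d_L(x, γ_v(t)) − t), equals log(−⟨x, x⁰ + v⟩_L) for every x ∈ L^d. -/
open MeasureTheory

/-- the Busemann function of the geodesic ray
`γ_v(t) = cosh(t)x⁰ + sinh(t)v` in the Lorentz model is `x ↦ log(−⟨x, x⁰+v⟩_L)`. -/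
theorem busemann_lorentz (d : ℕ) (v : Fin (d+1) → ℝ) (hv0 : v 0 = 0)
    (hv : mink d v v = 1) (x : Fin (d+1) → ℝ) (hx : x ∈ LorentzSet d) :
    Filter.Tendsto
      (fun t : ℝ =>
        dL d x (fun i => Real.cosh t * lorOrigin d i + Real.sinh t * v i) - t)
      Filter.atTop
      (nhds (Real.log (-(mink d x (fun i => lorOrigin d i + v i))))) := by
  obtain ⟨hxx, hx0⟩ := hx
  set s : ℝ := ∑ i : Fin d, x i.succ * v i.succ with hs
  -- basic sums
  have hsumx : ∑ i : Fin d, x i.succ ^ 2 = x 0 ^ 2 - 1 := by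
    have h := hxx
    simp only [mink] at h
    have : ∑ i : Fin d, x i.succ * x i.succ = ∑ i : Fin d, x i.succ ^ 2 := by
      apply Finset.sum_congr rfl; intro i _; ring
    rw [this] at h; nlinarith
  have hsumv : ∑ i : Fin d, v i.succ ^ 2 = 1 := by
    have h := hv
    simp only [mink, hv0] at h
    have : ∑ i : Fin d, v i.succ * v i.succ = ∑ i : Fin d, v i.succ ^ 2 := by
      apply Finset.sum_congr rfl; intro i _; ring
    rw [this] at h; linarith
  have hcs : s ^ 2 ≤ x 0 ^ 2 - 1 := by
    have := Finset.sum_mul_sq_le_sq_mul_sq Finset.univ (fun i : Fin d => x i.succ)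
      (fun i : Fin d => v i.succ)
    rw [hsumx, hsumv] at this
    simpa [hs] using this
  have hA : 0 < x 0 - s := by nlinarith
  have hB : 0 < x 0 + s := by nlinarith
  set A : ℝ := x 0 - s with hAdef
  -- the target value
  have htarget : -(mink d x (fun i => lorOrigin d i + v i)) = A := by
    simp only [mink, lorOrigin, hv0]
    have : ∀ i : Fin d, x i.succ * ((if i.succ = (0 : Fin (d+1)) then (1:ℝ) else 0) + v i.succ)
        = x i.succ * v i.succ := by
      intro i; simp [Fin.succ_ne_zero]
    rw [Finset.sum_congr rfl (fun i _ => this i)]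
    simp [hAdef, hs]
    ring
  -- the inner product along the ray
  have hu : ∀ t : ℝ, -(mink d x (fun i => Real.cosh t * lorOrigin d i + Real.sinh t * v i))
      = (A * Real.exp t + (x 0 + s) * Real.exp (-t)) / 2 := by
    intro t
    simp only [mink, lorOrigin, hv0]
    have : ∀ i : Fin d, x i.succ *
        (Real.cosh t * (if i.succ = (0 : Fin (d+1)) then (1:ℝ) else 0) + Real.sinh t * v i.succ)
        = Real.sinh t * (x i.succ * v i.succ) := by
      intro i; simp [Fin.succ_ne_zero]; ring
    rw [Finset.sum_congr rfl (fun i _ => this i), ← Finset.mul_sum, ← hs,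
      Real.cosh_eq, Real.sinh_eq]
    simp [hAdef]
    ring
  set u : ℝ → ℝ := fun t => (A * Real.exp t + (x 0 + s) * Real.exp (-t)) / 2 with hudef
  have hupos : ∀ t : ℝ, 0 < u t := by
    intro t
    have h1 := Real.exp_pos t
    have h2 := Real.exp_pos (-t)
    simp only [hudef]
    positivity
  -- the key function
  set g : ℝ → ℝ := fun t => u t * Real.exp (-t) +
    Real.sqrt ((u t * Real.exp (-t)) ^ 2 - Real.exp (-t) ^ 2) with hgdef
  have hgeq : ∀ t : ℝ, arcosh (u t) - t = Real.log (g t) := by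
    intro t
    have h1 : 0 < u t + Real.sqrt (u t ^ 2 - 1) := by
      have := Real.sqrt_nonneg (u t ^ 2 - 1)
      linarith [hupos t]
    have h2 : Real.sqrt ((u t * Real.exp (-t)) ^ 2 - Real.exp (-t) ^ 2)
        = Real.sqrt (u t ^ 2 - 1) * Real.exp (-t) := by
      rw [show (u t * Real.exp (-t)) ^ 2 - Real.exp (-t) ^ 2
          = (u t ^ 2 - 1) * Real.exp (-t) ^ 2 by ring,
        Real.sqrt_mul' _ (sq_nonneg _), Real.sqrt_sq (Real.exp_pos _).le]
    have hg : g t = (u t + Real.sqrt (u t ^ 2 - 1)) * Real.exp (-t) := by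
      simp only [hgdef]; rw [h2]; ring
    rw [hg, Real.log_mul h1.ne' (Real.exp_ne_zero _), Real.log_exp]
    simp only [arcosh]; ring
  -- limits
  have hexp2 : Filter.Tendsto (fun t : ℝ => Real.exp (-t) ^ 2) Filter.atTop (nhds 0) := by
    have := Real.tendsto_exp_neg_atTop_nhds_zero
    simpa using this.mul this |>.congr (fun t => by rw [← sq])
  have hf1 : Filter.Tendsto (fun t : ℝ => u t * Real.exp (-t)) Filter.atTop (nhds (A / 2)) := by
    have heq : ∀ t : ℝ, u t * Real.exp (-t) = A / 2 + (x 0 + s) / 2 * Real.exp (-t) ^ 2 := by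
      intro t
      have h := Real.exp_neg t
      have h2 : Real.exp t * Real.exp (-t) = 1 := by
        rw [← Real.exp_add]; simp
      simp only [hudef]
      nlinarith [Real.exp_pos t]
    rw [show (A / 2 : ℝ) = A / 2 + (x 0 + s) / 2 * 0 by ring]
    exact (tendsto_const_nhds.add ((hexp2.const_mul _))).congr
      (fun t => (heq t).symm)
  have hf2 : Filter.Tendsto
      (fun t : ℝ => Real.sqrt ((u t * Real.exp (-t)) ^ 2 - Real.exp (-t) ^ 2))
      Filter.atTop (nhds (A / 2)) := by
    have h : Filter.Tendsto (fun t : ℝ => (u t * Real.exp (-t)) ^ 2 - Real.exp (-t) ^ 2)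
        Filter.atTop (nhds ((A / 2) ^ 2 - 0)) := (hf1.pow 2).sub hexp2
    have := (Real.continuous_sqrt.continuousAt (x := (A/2)^2 - 0)).tendsto.comp h
    simpa [Function.comp_def, Real.sqrt_sq (by positivity : (0:ℝ) ≤ A / 2)] using this
  have hg_lim : Filter.Tendsto g Filter.atTop (nhds A) := by
    have := hf1.add hf2
    simpa [hgdef, show A / 2 + A / 2 = A by ring] using this
  have hA2 : (A : ℝ) ≠ 0 := hA.ne'
  have hlog : Filter.Tendsto (fun t => Real.log (g t)) Filter.atTop (nhds (Real.log A)) :=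
    (Real.continuousAt_log hA2).tendsto.comp hg_lim
  rw [htarget]
  refine hlog.congr (fun t => ?_)
  show Real.log (g t) = dL d x _ - t
  rw [dL, hu t, ← hgeq t]
end

section
/- The horospherical projection in the Lorentz model admits the closed form P̃^v(x) = −(1/(2c))·((1 + c²)x⁰ + (1 − c²)v), where c = ⟨x, x⁰+v⟩_L; that is, this expression equals ((1+u²)/(1−u²))x⁰ + (2u/(1−u²))v with u = (1+c)/(1−c). -/
open MeasureTheory

/-! The Lorentz point `x` is future timelike and `x⁰ + v` is future null, so
`c = ⟨x, x⁰ + v⟩_L < 0` by the reverse Cauchy–Schwarz inequality. Away from `c = 0` and `c = 1`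
the two sides agree coefficientwise, because `u = (1 + c)/(1 - c)` gives
`1 - u² = -4c/(1 - c)²` and `1 + u² = 2(1 + c²)/(1 - c)²`. -/

theorem mink_self (d : ℕ) (x : Fin (d+1) → ℝ) :
    mink d x x = -x 0 ^ 2 + ∑ i : Fin d, x i.succ ^ 2 := by
  simp only [mink, sq]

theorem mink_neg_of_timelike_of_null {d : ℕ} {x ℓ : Fin (d+1) → ℝ}
    (hx : mink d x x < 0) (hx0 : 0 < x 0) (hℓ : mink d ℓ ℓ = 0) (hℓ0 : 0 < ℓ 0) :
    mink d x ℓ < 0 := by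
  rw [mink_self] at hx hℓ
  have hcs : (∑ i : Fin d, x i.succ * ℓ i.succ) ^ 2 ≤
      (∑ i : Fin d, x i.succ ^ 2) * ∑ i : Fin d, ℓ i.succ ^ 2 :=
    Finset.sum_mul_sq_le_sq_mul_sq _ _ _
  have hlt : (∑ i : Fin d, x i.succ * ℓ i.succ) ^ 2 < (x 0 * ℓ 0) ^ 2 := by
    calc _ ≤ (∑ i : Fin d, x i.succ ^ 2) * ℓ 0 ^ 2 := by
          rwa [show ∑ i : Fin d, ℓ i.succ ^ 2 = ℓ 0 ^ 2 by linarith] at hcs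
      _ < x 0 ^ 2 * ℓ 0 ^ 2 := by gcongr; linarith
      _ = (x 0 * ℓ 0) ^ 2 := by ring
  have := (abs_lt_of_sq_lt_sq' hlt (by positivity)).2
  rw [mink]
  linarith

theorem mink_lorOrigin_add_self {d : ℕ} {v : Fin (d+1) → ℝ} (hv0 : v 0 = 0)
    (hv : mink d v v = 1) :
    mink d (fun i => lorOrigin d i + v i) (fun i => lorOrigin d i + v i) = 0 := by
  rw [mink_self] at hv ⊢
  simp only [lorOrigin, hv0, Fin.succ_ne_zero, if_true, if_false, zero_add, add_zero] at hv ⊢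
  linarith

theorem one_sub_sq_cayley {c : ℝ} (hc1 : c ≠ 1) :
    1 - ((1 + c) / (1 - c)) ^ 2 = -4 * c / (1 - c) ^ 2 := by
  have : 1 - c ≠ 0 := sub_ne_zero.2 hc1.symm
  field_simp
  ring

theorem one_add_sq_div_one_sub_sq_cayley {c : ℝ} (hc0 : c ≠ 0) (hc1 : c ≠ 1) :
    (1 + ((1 + c) / (1 - c)) ^ 2) / (1 - ((1 + c) / (1 - c)) ^ 2) =
      -(1 / (2 * c)) * (1 + c ^ 2) := by
  have : 1 - c ≠ 0 := sub_ne_zero.2 hc1.symm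
  rw [one_sub_sq_cayley hc1]
  field_simp
  ring

theorem two_mul_div_one_sub_sq_cayley {c : ℝ} (hc0 : c ≠ 0) (hc1 : c ≠ 1) :
    2 * ((1 + c) / (1 - c)) / (1 - ((1 + c) / (1 - c)) ^ 2) =
      -(1 / (2 * c)) * (1 - c ^ 2) := by
  have : 1 - c ≠ 0 := sub_ne_zero.2 hc1.symm
  rw [one_sub_sq_cayley hc1]
  field_simp
  ring

/-- closed form for the horospherical projection:
`−(1/(2c))((1+c²)x⁰ + (1−c²)v)` equals `((1+u²)/(1−u²))x⁰ + (2u/(1−u²))v`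
with `u = (1+c)/(1−c)`, `c = ⟨x, x⁰+v⟩_L`. -/
theorem horospherical_projection_closed_form (d : ℕ) (v : Fin (d+1) → ℝ)
    (hv0 : v 0 = 0) (hv : mink d v v = 1)
    (x : Fin (d+1) → ℝ) (hx : x ∈ LorentzSet d) :
    let c := mink d x (fun i => lorOrigin d i + v i)
    let u := (1 + c) / (1 - c)
    (fun i => -(1/(2*c)) * ((1 + c^2) * lorOrigin d i + (1 - c^2) * v i)) =
      (fun i => ((1 + u^2) / (1 - u^2)) * lorOrigin d i + (2*u / (1 - u^2)) * v i) := by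
  intro c u
  obtain ⟨hxx, hx0⟩ := hx
  have hc : c < 0 :=
    mink_neg_of_timelike_of_null (by linarith) hx0 (mink_lorOrigin_add_self hv0 hv)
      (by simp [lorOrigin, hv0])
  have hc0 : c ≠ 0 := hc.ne
  have hc1 : c ≠ 1 := by linarith
  funext i
  rw [one_add_sq_div_one_sub_sq_cayley hc0 hc1, two_mul_div_one_sub_sq_cayley hc0 hc1]
  ring
end

section
/- In the Poincaré ball, given an ideal point ṽ ∈ S^{d−1} and x ∈ B^d, the unique λ* ∈ (−1,1) such that B_ṽ(λ*ṽ) = B_ṽ(x) is λ* = (1 − ‖x‖₂² − ‖ṽ − x‖₂²) / (1 − ‖x‖₂² + ‖ṽ − x‖₂²), where B_ṽ(y) = log(‖ṽ − y‖₂² / (1 − ‖y‖₂²)). -/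
open MeasureTheory

/-- Squared Euclidean norm. -/
noncomputable def nsq (d : ℕ) (x : Fin d → ℝ) : ℝ := ∑ i, (x i)^2

/-- The Poincaré ball. -/
def BallSet (d : ℕ) : Set (Fin d → ℝ) := {x | nsq d x < 1}

/-- Poincaré ball distance. -/
noncomputable def dB (d : ℕ) (x y : Fin d → ℝ) : ℝ :=
  arcosh (1 + 2 * nsq d (x - y) / ((1 - nsq d x) * (1 - nsq d y)))

/-!
On the geodesic through the origin towards the ideal point `ṽ`, the Busemann function is
`B_ṽ(λṽ) = log c(λ)` with `c(λ) = (1 - λ)/(1 + λ)`. The map `c` is an involution exchanging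
`(-1, 1)` and `(0, ∞)`, so `B_ṽ(λṽ) = B_ṽ(x) = log t` holds exactly for `λ = c(t)`, and
`c(t)` with `t = ‖ṽ - x‖² / (1 - ‖x‖²)` is the claimed formula.
-/

section Nsq

variable {d : ℕ}

lemma nsq_nonneg (x : Fin d → ℝ) : 0 ≤ nsq d x :=
  Finset.sum_nonneg fun i _ => sq_nonneg (x i)

lemma nsq_eq_zero_iff {x : Fin d → ℝ} : nsq d x = 0 ↔ x = 0 := by
  rw [nsq, Finset.sum_eq_zero_iff_of_nonneg fun i _ => sq_nonneg (x i)]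
  simp [funext_iff]

lemma nsq_pos {x : Fin d → ℝ} (hx : x ≠ 0) : 0 < nsq d x :=
  (nsq_nonneg x).lt_of_ne' (mt nsq_eq_zero_iff.1 hx)

lemma nsq_smul (c : ℝ) (x : Fin d → ℝ) : nsq d (c • x) = c ^ 2 * nsq d x := by
  simp [nsq, mul_pow, Finset.mul_sum]

end Nsq

noncomputable def cayley (l : ℝ) : ℝ := (1 - l) / (1 + l)

lemma cayley_div {a : ℝ} (ha : a ≠ 0) (b : ℝ) : cayley (b / a) = (a - b) / (a + b) := by
  rw [cayley, one_sub_div ha, one_add_div ha, div_div_div_cancel_right₀ ha]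

lemma cayley_cayley {l : ℝ} (hl : 1 + l ≠ 0) : cayley (cayley l) = l := by
  unfold cayley
  field_simp
  ring

lemma cayley_pos {l : ℝ} (hl : l ∈ Set.Ioo (-1 : ℝ) 1) : 0 < cayley l :=
  div_pos (by linarith [hl.2]) (by linarith [hl.1])

lemma cayley_mem_Ioo {t : ℝ} (ht : 0 < t) : cayley t ∈ Set.Ioo (-1 : ℝ) 1 := by
  have h : 0 < 1 + t := by linarith
  constructor
  · rw [cayley, lt_div_iff₀ h]; linarith
  · rw [cayley, div_lt_one h]; linarith

lemma sq_one_sub_div_one_sub_sq (l : ℝ) : (1 - l) ^ 2 / (1 - l ^ 2) = cayley l := by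
  rcases eq_or_ne (1 - l) 0 with h | h
  · simp [cayley, show l = 1 by linarith]
  · rw [cayley, show 1 - l ^ 2 = (1 - l) * (1 + l) by ring, sq, mul_div_mul_left _ _ h]

noncomputable def busemann (d : ℕ) (v y : Fin d → ℝ) : ℝ :=
  Real.log (nsq d (v - y) / (1 - nsq d y))

lemma busemann_smul_self {d : ℕ} {v : Fin d → ℝ} (hv : nsq d v = 1) (l : ℝ) :
    busemann d v (l • v) = Real.log (cayley l) := by
  have hsub : v - l • v = (1 - l) • v := by rw [sub_smul, one_smul]
  rw [busemann, hsub, nsq_smul, nsq_smul, hv, mul_one, mul_one, sq_one_sub_div_one_sub_sq]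

/-- the unique `λ* ∈ (−1,1)` with `B_ṽ(λ*ṽ) = B_ṽ(x)` is
`(1 − ‖x‖² − ‖ṽ − x‖²)/(1 − ‖x‖² + ‖ṽ − x‖²)`, where
`B_ṽ(y) = log(‖ṽ − y‖²/(1 − ‖y‖²))`. -/
theorem horospherical_projection_poincare (d : ℕ) (vt : Fin d → ℝ)
    (hvt : nsq d vt = 1) (x : Fin d → ℝ) (hx : x ∈ BallSet d) :
    let B : (Fin d → ℝ) → ℝ := fun y => Real.log (nsq d (vt - y) / (1 - nsq d y))
    let lam := (1 - nsq d x - nsq d (vt - x)) / (1 - nsq d x + nsq d (vt - x))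
    (lam ∈ Set.Ioo (-1 : ℝ) 1 ∧ B (lam • vt) = B x) ∧
      ∀ l ∈ Set.Ioo (-1 : ℝ) 1, B (l • vt) = B x → l = lam := by
  intro B lam
  have hx : nsq d x < 1 := hx
  have hvx : vt - x ≠ 0 := sub_ne_zero.2 fun h => by rw [h] at hvt; exact hx.ne hvt
  set t := nsq d (vt - x) / (1 - nsq d x)
  have ht : 0 < t := div_pos (nsq_pos hvx) (by linarith)
  have hlam : lam = cayley t := (cayley_div (by linarith) _).symm
  have hB_ray (l : ℝ) : B (l • vt) = Real.log (cayley l) := busemann_smul_self hvt l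
  have hB_x : B x = Real.log t := rfl
  refine ⟨⟨hlam ▸ cayley_mem_Ioo ht, ?_⟩, fun l hl hBl => ?_⟩
  · rw [hB_ray, hB_x, hlam, cayley_cayley (by linarith)]
  · rw [hB_ray, hB_x] at hBl
    have hcl : cayley l = t := Real.log_injOn_pos (cayley_pos hl) ht hBl
    rw [hlam, ← hcl, cayley_cayley (by linarith [hl.1])]
end

section
/- For x ∈ B^d and ideal point ṽ ∈ S^{d−1}, with v = (0, ṽ), one has ⟨P_{B→L}(x), x⁰ + v⟩_L = −‖x − ṽ‖₂² / (1 − ‖x‖₂²); consequently the Busemann functions correspond under the Poincaré-to-Lorentz map: B_v(P_{B→L}(x)) = B_ṽ(x). -/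
open MeasureTheory

/-- The map from the Poincaré ball to the Lorentz model. -/
noncomputable def PBL (d : ℕ) (x : Fin d → ℝ) : Fin (d+1) → ℝ :=
  Fin.cons ((1 + nsq d x) / (1 - nsq d x)) (fun i => 2 * x i / (1 - nsq d x))

/-- The map from the Lorentz model to the Poincaré ball. -/
noncomputable def PLB (d : ℕ) (y : Fin (d+1) → ℝ) : Fin d → ℝ :=
  fun i => y i.succ / (1 + y 0)

/-- `⟨P_{B→L}(x), x⁰+v⟩_L = −‖x−ṽ‖²/(1−‖x‖²)` and hence the Busemann
functions correspond under the Poincaré-to-Lorentz map. -/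
theorem busemann_correspondence (d : ℕ) (vt : Fin d → ℝ) (hvt : nsq d vt = 1)
    (x : Fin d → ℝ) (hx : x ∈ BallSet d) :
    let v : Fin (d+1) → ℝ := Fin.cons 0 vt
    mink d (PBL d x) (fun i => lorOrigin d i + v i) =
      -(nsq d (x - vt)) / (1 - nsq d x) ∧
    Real.log (-(mink d (PBL d x) (fun i => lorOrigin d i + v i))) =
      Real.log (nsq d (vt - x) / (1 - nsq d x)) := by

  intro v
  have hx' : nsq d x < 1 := hx
  have h1 : (1 : ℝ) - nsq d x ≠ 0 := by linarith
  have key : mink d (PBL d x) (fun i => lorOrigin d i + v i) =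
      -(nsq d (x - vt)) / (1 - nsq d x) := by
    have hsub : nsq d (x - vt) = nsq d x - 2 * ∑ i, x i * vt i + 1 := by
      simp only [nsq, Pi.sub_apply, sub_sq]
      rw [Finset.sum_add_distrib, Finset.sum_sub_distrib]
      rw [← Finset.sum_sub_distrib]
      rw [show (∑ i, ((x i)^2 - 2 * x i * vt i) : ℝ) = ∑ i, (x i)^2 - 2 * ∑ i, x i * vt i by
        rw [Finset.sum_sub_distrib, Finset.mul_sum]; congr 1; congr 1; ext i; ring]
      have : (∑ i, (vt i)^2 : ℝ) = 1 := hvt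
      rw [this]
    simp only [mink, PBL, lorOrigin, v, Fin.cons_zero, Fin.cons_succ, Fin.succ_ne_zero,
      if_false, if_pos rfl, ↓reduceIte]
    rw [hsub]
    have hsum : (∑ i : Fin d, 2 * x i / (1 - nsq d x) * (0 + vt i) : ℝ)
        = (2 * ∑ i, x i * vt i) / (1 - nsq d x) := by
      rw [Finset.mul_sum, Finset.sum_div]
      refine Finset.sum_congr rfl fun i _ => ?_
      ring
    rw [hsum]
    field_simp
    ring
  refine ⟨key, ?_⟩
  rw [key]
  have : nsq d (vt - x) = nsq d (x - vt) := by
    simp only [nsq]; congr 1; ext i; rw [Pi.sub_apply, Pi.sub_apply]; ring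
  rw [this]
  rw [neg_div, neg_neg]
end

section
/- Fix a unit tangent vector v at the origin of L^d and a point z on the geodesic G = span(x⁰,v) ∩ L^d. Then the preimage of z under the geodesic projection, {x ∈ L^d : P^v(x) = z}, equals span(v_z)^⊥ ∩ L^d, where v_z is the unit vector in span(x⁰, v) that is Euclidean-orthogonal to z (obtained by a rotation in the plane span(x⁰,v)). -/
open MeasureTheory

set_option maxHeartbeats 1000000 in
/-- the preimage of a point `z` on the geodesic under the geodesic
projection is `span(v_z)^⊥ ∩ L^d`, where `v_z` is a unit vector of `span(x⁰,v)`
Euclidean-orthogonal to `z`. -/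
theorem geodesic_projection_fiber (d : ℕ) (v : Fin (d+1) → ℝ)
    (hv0 : v 0 = 0) (hv : mink d v v = 1)
    (z : Fin (d+1) → ℝ)
    (hz : z ∈ Submodule.span ℝ {lorOrigin d, v} ∧ z ∈ LorentzSet d)
    (vz : Fin (d+1) → ℝ)
    (hvz_mem : vz ∈ Submodule.span ℝ ({lorOrigin d, v} : Set (Fin (d+1) → ℝ)))
    (hvz_unit : ∑ i, (vz i)^2 = 1)
    (hvz_orth : ∑ i, z i * vz i = 0) :
    {x | x ∈ LorentzSet d ∧ PvGeo d v x = z} =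
      {x | ∑ i, x i * vz i = 0} ∩ LorentzSet d := by
  obtain ⟨hzspan, hzL⟩ := hz
  rw [Submodule.mem_span_pair] at hzspan hvz_mem
  obtain ⟨a, b, hab⟩ := hzspan
  obtain ⟨p, q, hpq⟩ := hvz_mem
  -- norm of v
  have hvv : ∑ i : Fin d, v i.succ * v i.succ = 1 := by
    have := hv
    simp only [mink, hv0, mul_zero, neg_zero, zero_add] at this
    exact this
  -- components of z
  have hz0 : z 0 = a := by
    rw [← hab]; simp [lorOrigin, hv0]
  have hzs : ∀ i : Fin d, z i.succ = b * v i.succ := by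
    intro i; rw [← hab]; simp [lorOrigin, Fin.succ_ne_zero]
  -- components of vz
  have hvz0 : vz 0 = p := by
    rw [← hpq]; simp [lorOrigin, hv0]
  have hvzs : ∀ i : Fin d, vz i.succ = q * v i.succ := by
    intro i; rw [← hpq]; simp [lorOrigin, Fin.succ_ne_zero]
  -- z on Lorentz set
  have hsumz : ∑ i : Fin d, z i.succ * z i.succ = b*b := by
    have h : ∀ i : Fin d, z i.succ * z i.succ = b*b*(v i.succ*v i.succ) := fun i => by
      rw [hzs i]; ring
    rw [Finset.sum_congr rfl fun i _ => h i, ← Finset.mul_sum, hvv, mul_one]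
  have hza : -(a*a) + b*b = -1 := by
    have := hzL.1
    simp only [mink] at this
    rw [hz0, hsumz] at this
    exact this
  have ha_pos : 0 < a := hz0 ▸ hzL.2
  -- unit and orthogonality relations in the plane
  have hpq1 : p*p + q*q = 1 := by
    have := hvz_unit
    rw [Fin.sum_univ_succ] at this
    rw [hvz0] at this
    have h2 : ∑ i : Fin d, (vz i.succ)^2 = q*q := by
      have h : ∀ i : Fin d, (vz i.succ)^2 = q*q*(v i.succ*v i.succ) := fun i => by
        rw [hvzs i]; ring
      rw [Finset.sum_congr rfl fun i _ => h i, ← Finset.mul_sum, hvv, mul_one]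
    rw [h2] at this
    nlinarith [this]
  have horth : a*p + b*q = 0 := by
    have := hvz_orth
    rw [Fin.sum_univ_succ, hvz0, hz0] at this
    have h2 : ∑ i : Fin d, z i.succ * vz i.succ = b*q := by
      have h : ∀ i : Fin d, z i.succ * vz i.succ = b*q*(v i.succ*v i.succ) := fun i => by
        rw [hvzs i, hzs i]; ring
      rw [Finset.sum_congr rfl fun i _ => h i, ← Finset.mul_sum, hvv, mul_one]
    rw [h2] at this
    linarith [this]
  ext x
  simp only [Set.mem_setOf_eq, Set.mem_inter_iff]
  -- generic facts for x ∈ LorentzSet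
  constructor
  · rintro ⟨hxL, hP⟩
    refine ⟨?_, hxL⟩
    set B : ℝ := ∑ i : Fin d, x i.succ * v i.succ with hB
    have hmx0 : mink d x (lorOrigin d) = -(x 0) := by
      simp [mink, lorOrigin, Fin.succ_ne_zero]
    have hmxv : mink d x v = B := by
      simp [mink, hv0, hB]
    have hS : ∑ i : Fin d, x i.succ * x i.succ = x 0 * x 0 - 1 := by
      have := hxL.1; simp only [mink] at this; linarith
    have hCS : B^2 ≤ (∑ i : Fin d, x i.succ * x i.succ) * (∑ i : Fin d, v i.succ * v i.succ) := by
      have h := Finset.sum_mul_sq_le_sq_mul_sq Finset.univ (fun i : Fin d => x i.succ) (fun i => v i.succ)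
      simp only [sq] at h ⊢
      exact h
    have hx0pos : 0 < x 0 := hxL.2
    have hr2 : 1 ≤ (x 0)^2 - B^2 := by
      rw [hvv, mul_one, hS] at hCS
      nlinarith
    have hrpos : 0 < Real.sqrt ((x 0)^2 - B^2) := Real.sqrt_pos.mpr (by linarith)
    set r : ℝ := Real.sqrt ((x 0)^2 - B^2) with hrdef
    have hsqarg : (mink d x (lorOrigin d))^2 - (mink d x v)^2 = (x 0)^2 - B^2 := by
      rw [hmx0, hmxv]; ring
    -- component 0 of hP
    have h0 : x 0 / r = a := by
      have := congrFun hP 0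
      simp only [PvGeo, hmx0, hmxv, lorOrigin, hsqarg, hv0, neg_neg, neg_sq, if_pos,
        mul_zero, mul_one, add_zero, if_true] at this
      rw [hz0] at this
      simpa using this
    -- dot with v
    have hBb : B / r = b := by
      have h1 : ∑ i : Fin d, PvGeo d v x i.succ * v i.succ = ∑ i : Fin d, z i.succ * v i.succ := by
        rw [hP]
      have h2 : ∀ i : Fin d, PvGeo d v x i.succ * v i.succ = (B/r) * (v i.succ * v i.succ) := by
        intro i
        simp only [PvGeo, hmx0, hmxv, lorOrigin, hsqarg, neg_neg, neg_sq,
          if_neg (Fin.succ_ne_zero i)]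
        ring
      have h3 : ∀ i : Fin d, z i.succ * v i.succ = b * (v i.succ * v i.succ) := by
        intro i; rw [hzs i]; ring
      rw [Finset.sum_congr rfl (fun i _ => h2 i), Finset.sum_congr rfl (fun i _ => h3 i),
        ← Finset.mul_sum, ← Finset.mul_sum, hvv, mul_one, mul_one] at h1
      exact h1
    have hx0 : x 0 = a * r := by
      field_simp at h0; linarith [h0]
    have hBr : B = b * r := by
      field_simp at hBb; linarith [hBb]
    -- compute the euclidean inner product
    have hsum : ∑ i, x i * vz i = x 0 * p + q * B := by
      rw [Fin.sum_univ_succ, hvz0]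
      congr 1
      rw [show q * B = ∑ i : Fin d, x i.succ * (q * v i.succ) from by
        rw [hB, Finset.mul_sum]; refine Finset.sum_congr rfl fun i _ => by ring]
      refine Finset.sum_congr rfl fun i _ => by rw [hvzs i]
    rw [hsum, hx0, hBr]
    nlinarith [horth]
  · rintro ⟨hxo, hxL⟩
    refine ⟨hxL, ?_⟩
    set B : ℝ := ∑ i : Fin d, x i.succ * v i.succ with hB
    have hmx0 : mink d x (lorOrigin d) = -(x 0) := by
      simp [mink, lorOrigin, Fin.succ_ne_zero]
    have hmxv : mink d x v = B := by
      simp [mink, hv0, hB]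
    have hx0pos : 0 < x 0 := hxL.2
    have hsum : ∑ i, x i * vz i = x 0 * p + q * B := by
      rw [Fin.sum_univ_succ, hvz0]
      congr 1
      rw [show q * B = ∑ i : Fin d, x i.succ * (q * v i.succ) from by
        rw [hB, Finset.mul_sum]; refine Finset.sum_congr rfl fun i _ => by ring]
      refine Finset.sum_congr rfl fun i _ => by rw [hvzs i]
    rw [hsum] at hxo
    -- key collinearity: a * B = b * x 0
    have hp1 : (a*B - b*x 0) * p = 0 := by linear_combination B * horth - b * hxo
    have hq1 : (a*B - b*x 0) * q = 0 := by linear_combination a * hxo - x 0 * horth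
    have hkey : a * B = b * x 0 := by
      have h : (a*B - b*x 0) * (p*p + q*q) = 0 := by linear_combination p*hp1 + q*hq1
      rw [hpq1, mul_one] at h
      linarith
    have ha : a ≠ 0 := ne_of_gt ha_pos
    have hargeq : (x 0)^2 - B^2 = (x 0 / a)^2 := by
      field_simp
      linear_combination (-(a*B + b*x 0)) * hkey - x 0^2 * hza
    have hr : Real.sqrt ((-(x 0))^2 - B^2) = x 0 / a := by
      rw [neg_sq, hargeq]
      exact Real.sqrt_sq (by positivity)
    funext i
    simp only [PvGeo, hmx0, hmxv, neg_neg, hr]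
    rw [← hab]
    simp only [Pi.add_apply, Pi.smul_apply, smul_eq_mul]
    rw [div_eq_iff (by positivity : (x 0 / a) ≠ 0)]
    field_simp
    linear_combination v i * hkey
end
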